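/- Let L, λ̃ > 0, let p : ℝ² → ℝ be a C^∞ function solving the observer kernel model (p-model) with parameter λ̃, and assume α := λ̃ - (1/2) ∫_0^L (∂_x p)(L,y)² dy > 0. Let w : ℝ² → ℝ be a C^∞ smooth solution of the target error system. Then for all t ≥ 0: ( ∫_0^L w_t(x,t)² dx )^{1/2} ≤ ( ∫_0^L w_t(x,0)² dx )^{1/2} · e^{-α t}, where w_t(x,0) = -( w_x(x,0) + w_{xxx}(x,0) + λ̃ w(x,0) ). -/

import Mathlib

open MeasureTheory Real

/-- Partial derivative in the first variable. -/
noncomputable def pd1 (f : ℝ × ℝ → ℝ) : ℝ × ℝ → ℝ := fun q => deriv (fun s => f (s, q.2)) q.1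

/-- Partial derivative in the second variable. -/
noncomputable def pd2 (f : ℝ × ℝ → ℝ) : ℝ × ℝ → ℝ := fun q => deriv (fun s => f (q.1, s)) q.2

/-- `p` solves the observer kernel model (p-model) with parameter `lt` on the triangle `Δ_L`. -/
def SolvesPEq (L lt : ℝ) (p : ℝ × ℝ → ℝ) : Prop :=
  (∀ x y : ℝ, 0 ≤ y → y ≤ x → x ≤ L →
      pd1 (pd1 (pd1 p)) (x, y) + pd2 (pd2 (pd2 p)) (x, y) + pd1 p (x, y) + pd2 p (x, y)
        = lt * p (x, y)) ∧
  (∀ y : ℝ, 0 ≤ y → y ≤ L → p (L, y) = 0) ∧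
  (∀ x : ℝ, 0 ≤ x → x ≤ L → p (x, x) = 0) ∧
  (∀ x : ℝ, 0 ≤ x → x ≤ L → pd1 p (x, x) = -(lt * (x - L)) / 3)

/-- `w` (arguments `(x,t)`) is a smooth solution of the target error system. -/
def TargetErr (L lt : ℝ) (p w : ℝ × ℝ → ℝ) : Prop :=
  (∀ x t : ℝ, 0 ≤ x → x ≤ L → 0 ≤ t →
      pd2 w (x, t) + pd1 w (x, t) + pd1 (pd1 (pd1 w)) (x, t) + lt * w (x, t) = 0) ∧
  (∀ t : ℝ, 0 ≤ t → w (0, t) = 0) ∧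
  (∀ t : ℝ, 0 ≤ t → w (L, t) = 0) ∧
  (∀ t : ℝ, 0 ≤ t → pd1 w (L, t) = ∫ y in (0:ℝ)..L, pd1 p (L, y) * w (y, t))

/- ### Auxiliary lemmas -/

lemma hasDerivAt_slice1 {f : ℝ × ℝ → ℝ} (hf : Differentiable ℝ f) (a b : ℝ) :
    HasDerivAt (fun s => f (s, b)) (fderiv ℝ f (a, b) (1, 0)) a := by
  have h : HasDerivAt (fun s : ℝ => (s, b)) ((1 : ℝ), (0 : ℝ)) a :=
    (hasDerivAt_id a).prodMk (hasDerivAt_const a b)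
  exact (hf (a, b)).hasFDerivAt.comp_hasDerivAt a h

lemma hasDerivAt_slice2 {f : ℝ × ℝ → ℝ} (hf : Differentiable ℝ f) (a b : ℝ) :
    HasDerivAt (fun s => f (a, s)) (fderiv ℝ f (a, b) (0, 1)) b := by
  have h : HasDerivAt (fun s : ℝ => (a, s)) ((0 : ℝ), (1 : ℝ)) b :=
    (hasDerivAt_const b a).prodMk (hasDerivAt_id b)
  exact (hf (a, b)).hasFDerivAt.comp_hasDerivAt b h

lemma pd1_eq {f : ℝ × ℝ → ℝ} (hf : Differentiable ℝ f) (q : ℝ × ℝ) :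
    pd1 f q = fderiv ℝ f q (1, 0) := (hasDerivAt_slice1 hf q.1 q.2).deriv

lemma pd2_eq {f : ℝ × ℝ → ℝ} (hf : Differentiable ℝ f) (q : ℝ × ℝ) :
    pd2 f q = fderiv ℝ f q (0, 1) := (hasDerivAt_slice2 hf q.1 q.2).deriv

lemma contDiff_pd1 {f : ℝ × ℝ → ℝ} (hf : ContDiff ℝ (⊤ : ℕ∞) f) : ContDiff ℝ (⊤ : ℕ∞) (pd1 f) := by
  have : pd1 f = fun q => fderiv ℝ f q (1, 0) :=
    funext fun q => pd1_eq (hf.differentiable (by simp)) q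
  rw [this]
  exact (hf.fderiv_right (by simp)).clm_apply contDiff_const

lemma contDiff_pd2 {f : ℝ × ℝ → ℝ} (hf : ContDiff ℝ (⊤ : ℕ∞) f) : ContDiff ℝ (⊤ : ℕ∞) (pd2 f) := by
  have : pd2 f = fun q => fderiv ℝ f q (0, 1) :=
    funext fun q => pd2_eq (hf.differentiable (by simp)) q
  rw [this]
  exact (hf.fderiv_right (by simp)).clm_apply contDiff_const

lemma hasDerivAt_slice1' {f : ℝ × ℝ → ℝ} (hf : Differentiable ℝ f) (a b : ℝ) :
    HasDerivAt (fun s => f (s, b)) (pd1 f (a, b)) a := by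
  rw [pd1_eq hf]; exact hasDerivAt_slice1 hf a b

lemma hasDerivAt_slice2' {f : ℝ × ℝ → ℝ} (hf : Differentiable ℝ f) (a b : ℝ) :
    HasDerivAt (fun s => f (a, s)) (pd2 f (a, b)) b := by
  rw [pd2_eq hf]; exact hasDerivAt_slice2 hf a b

lemma pd_comm {f : ℝ × ℝ → ℝ} (hf : ContDiff ℝ (⊤ : ℕ∞) f) : pd1 (pd2 f) = pd2 (pd1 f) := by
  have hdf : Differentiable ℝ f := hf.differentiable (by simp)
  have hf' : ContDiff ℝ (⊤ : ℕ∞) (fderiv ℝ f) := hf.fderiv_right (by simp)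
  have hdf' : Differentiable ℝ (fderiv ℝ f) := hf'.differentiable (by simp)
  funext q
  have hsym : ∀ u v : ℝ × ℝ,
      fderiv ℝ (fderiv ℝ f) q u v = fderiv ℝ (fderiv ℝ f) q v u :=
    second_derivative_symmetric (fun y => (hdf y).hasFDerivAt) (hdf' q).hasFDerivAt
  have key : ∀ u v : ℝ × ℝ, fderiv ℝ (fun y => fderiv ℝ f y v) q u
      = fderiv ℝ (fderiv ℝ f) q u v := by
    intro u v
    rw [fderiv_clm_apply (hdf' q) (differentiableAt_const v)]
    simp
  have h2 : pd2 f = fun y => fderiv ℝ f y (0, 1) := funext fun y => pd2_eq hdf y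
  have h1 : pd1 f = fun y => fderiv ℝ f y (1, 0) := funext fun y => pd1_eq hdf y
  have d2 : Differentiable ℝ (pd2 f) := (contDiff_pd2 hf).differentiable (by simp)
  have d1 : Differentiable ℝ (pd1 f) := (contDiff_pd1 hf).differentiable (by simp)
  rw [pd1_eq d2 q, pd2_eq d1 q, h1, h2, key, key, hsym]

lemma cont_slice1 {f : ℝ × ℝ → ℝ} (hf : Continuous f) (t : ℝ) :
    Continuous fun x => f (x, t) := hf.comp (continuous_id.prodMk continuous_const)

/-- Differentiation under the interval integral sign, for smooth integrands. -/
lemma hasDerivAt_integral_param {g : ℝ × ℝ → ℝ} (hg : ContDiff ℝ (⊤ : ℕ∞) g) (a b t : ℝ) :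
    HasDerivAt (fun s => ∫ x in a..b, g (x, s)) (∫ x in a..b, pd2 g (x, t)) t := by
  have hgc : Continuous g := hg.continuous
  have hg2 : Continuous (pd2 g) := (contDiff_pd2 hg).continuous
  have hdg : Differentiable ℝ g := hg.differentiable (by simp)
  obtain ⟨C, hC⟩ : ∃ C, ∀ q ∈ (Set.uIcc a b ×ˢ Set.Icc (t - 1) (t + 1)), ‖pd2 g q‖ ≤ C :=
    (isCompact_uIcc.prod isCompact_Icc).exists_bound_of_continuousOn hg2.continuousOn
  have key := intervalIntegral.hasDerivAt_integral_of_dominated_loc_of_deriv_le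
    (F := fun s x => g (x, s)) (F' := fun s x => pd2 g (x, s)) (x₀ := t) (a := a) (b := b)
    (μ := volume) (bound := fun _ => C) (Metric.ball_mem_nhds t one_pos)
    (Filter.Eventually.of_forall fun s => (cont_slice1 hgc s).aestronglyMeasurable)
    ((cont_slice1 hgc t).intervalIntegrable a b)
    ((cont_slice1 hg2 t).aestronglyMeasurable)
    (Filter.Eventually.of_forall fun x hx s hs => by
      apply hC
      refine ⟨Set.uIoc_subset_uIcc hx, ?_⟩
      have := Metric.mem_ball.mp hs
      rw [Real.dist_eq] at this
      constructor <;> [linarith [abs_lt.mp this]; linarith [abs_lt.mp this]])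
    intervalIntegrable_const
    (Filter.Eventually.of_forall fun x hx s hs => hasDerivAt_slice2' hdg x s)
  exact key.2

/-- Cauchy–Schwarz for interval integrals of continuous functions. -/
lemma cs_interval {f g : ℝ → ℝ} (hf : Continuous f) (hg : Continuous g) {a b : ℝ} (hab : a ≤ b) :
    (∫ x in a..b, f x * g x) ^ 2 ≤ (∫ x in a..b, f x ^ 2) * (∫ x in a..b, g x ^ 2) := by
  set A : ℝ := ∫ x in a..b, f x ^ 2 with hA
  set B : ℝ := ∫ x in a..b, f x * g x with hB
  set C : ℝ := ∫ x in a..b, g x ^ 2 with hC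
  have key : ∀ r : ℝ, 0 ≤ C * (r * r) + (2 * B) * r + A := by
    intro r
    have h1 : (∫ x in a..b, (r * g x + f x) ^ 2) = C * (r * r) + (2 * B) * r + A := by
      have e : ∀ x : ℝ, (r * g x + f x) ^ 2
          = (r * r) * g x ^ 2 + (2 * r) * (f x * g x) + f x ^ 2 := fun x => by ring
      simp_rw [e]
      rw [intervalIntegral.integral_add, intervalIntegral.integral_add,
        intervalIntegral.integral_const_mul, intervalIntegral.integral_const_mul]
      · ring
      · exact ((continuous_const.mul (hg.pow 2)).intervalIntegrable a b)
      · exact ((continuous_const.mul (hf.mul hg)).intervalIntegrable a b)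
      · exact (((continuous_const.mul (hg.pow 2)).intervalIntegrable a b).add
          ((continuous_const.mul (hf.mul hg)).intervalIntegrable a b))
      · exact ((hf.pow 2).intervalIntegrable a b)
    rw [← h1]
    apply intervalIntegral.integral_nonneg hab
    intro x _; positivity
  have hd := discrim_le_zero key
  rw [discrim] at hd
  nlinarith [hd]

/-- exponential `L²` decay of the time derivative of smooth solutions of the
target error system (note that `w_t(x,0) = -(w_x(x,0) + w_{xxx}(x,0) + λ̃ w(x,0))`). -/
theorem stmt_7 (L lt : ℝ) (hL : 0 < L) (hlt : 0 < lt)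
    (p : ℝ × ℝ → ℝ) (hp : ContDiff ℝ (⊤ : ℕ∞) p) (hpEq : SolvesPEq L lt p)
    (hα : 0 < lt - (1 / 2) * ∫ y in (0:ℝ)..L, (pd1 p (L, y)) ^ 2)
    (w : ℝ × ℝ → ℝ) (hw : ContDiff ℝ (⊤ : ℕ∞) w) (hwEq : TargetErr L lt p w) :
    ∀ t : ℝ, 0 ≤ t →
      Real.sqrt (∫ x in (0:ℝ)..L, (pd2 w (x, t)) ^ 2)
        ≤ Real.sqrt (∫ x in (0:ℝ)..L, (pd2 w (x, 0)) ^ 2) *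
            Real.exp (-(lt - (1 / 2) * ∫ y in (0:ℝ)..L, (pd1 p (L, y)) ^ 2) * t) := by
  intro T hT
  obtain ⟨hPDE, hB0, hBL, hBx⟩ := hwEq
  have hdw : Differentiable ℝ w := hw.differentiable (by simp)
  set K : ℝ := ∫ y in (0:ℝ)..L, (pd1 p (L, y)) ^ 2 with hK_def
  set α : ℝ := lt - 1 / 2 * K with hα_def
  set v : ℝ × ℝ → ℝ := pd2 w with hv_def
  have hv : ContDiff ℝ (⊤ : ℕ∞) v := contDiff_pd2 hw
  have hdv : Differentiable ℝ v := hv.differentiable (by simp)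
  have hvc : Continuous v := hv.continuous
  have hv1 : ContDiff ℝ (⊤ : ℕ∞) (pd1 v) := contDiff_pd1 hv
  have hdv1 : Differentiable ℝ (pd1 v) := hv1.differentiable (by simp)
  have hv11 : ContDiff ℝ (⊤ : ℕ∞) (pd1 (pd1 v)) := contDiff_pd1 hv1
  have hdv11 : Differentiable ℝ (pd1 (pd1 v)) := hv11.differentiable (by simp)
  have hv111 : ContDiff ℝ (⊤ : ℕ∞) (pd1 (pd1 (pd1 v))) := contDiff_pd1 hv11
  have hkc : Continuous fun y => pd1 p (L, y) :=
    (contDiff_pd1 hp).continuous.comp (continuous_const.prodMk continuous_id)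
  set E : ℝ → ℝ := fun t => ∫ x in (0:ℝ)..L, v (x, t) ^ 2 with hE_def
  have hEnn : ∀ t : ℝ, 0 ≤ E t := fun t => by
    rw [hE_def]
    exact intervalIntegral.integral_nonneg hL.le fun x _ => sq_nonneg _
  set D : ℝ → ℝ := fun t => ∫ x in (0:ℝ)..L, 2 * v (x, t) * pd2 v (x, t) with hD_def
  -- derivative of the energy
  have hE' : ∀ t : ℝ, HasDerivAt E (D t) t := by
    intro t
    have h := hasDerivAt_integral_param (g := fun q => v q ^ 2) (hv.pow 2) 0 L t
    have heq : (∫ x in (0:ℝ)..L, pd2 (fun q => v q ^ 2) (x, t)) = D t := by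
      rw [hD_def]
      apply intervalIntegral.integral_congr
      intro x _
      have h1 : HasDerivAt (fun s => v (x, s) ^ 2) (2 * v (x, t) * pd2 v (x, t)) t := by
        have h2 := (hasDerivAt_slice2' hdv x t).fun_pow 2
        refine h2.congr_deriv ?_
        push_cast; ring
      show pd2 (fun q => v q ^ 2) (x, t) = 2 * v (x, t) * pd2 v (x, t)
      have h0 : pd2 (fun q => v q ^ 2) (x, t) = deriv (fun s => v (x, s) ^ 2) t := rfl
      rw [h0, h1.deriv]
    rw [hE_def, ← heq]
    exact h
  -- commuting partial derivatives
  have hcomm1 : pd1 v = pd2 (pd1 w) := by rw [hv_def]; exact pd_comm hw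
  have hcomm3 : pd1 (pd1 (pd1 v)) = pd2 (pd1 (pd1 (pd1 w))) := by
    rw [hv_def, pd_comm hw, pd_comm (contDiff_pd1 hw),
      pd_comm (contDiff_pd1 (contDiff_pd1 hw))]
  -- the evolution equation for v at positive times
  have veq : ∀ x t : ℝ, 0 ≤ x → x ≤ L → 0 < t →
      pd2 v (x, t) = -(pd1 v (x, t) + pd1 (pd1 (pd1 v)) (x, t) + lt * v (x, t)) := by
    intro x t hx0 hxL ht
    have hev : (fun s => pd2 w (x, s) + pd1 w (x, s) + pd1 (pd1 (pd1 w)) (x, s) + lt * w (x, s))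
        =ᶠ[nhds t] fun _ => (0 : ℝ) := by
      filter_upwards [Ioi_mem_nhds ht] with s hs
      exact hPDE x s hx0 hxL hs.le
    have hD0 : deriv (fun s => pd2 w (x, s) + pd1 w (x, s) + pd1 (pd1 (pd1 w)) (x, s)
        + lt * w (x, s)) t = 0 := by rw [hev.deriv_eq]; simp
    have hsum : HasDerivAt (fun s => pd2 w (x, s) + pd1 w (x, s) + pd1 (pd1 (pd1 w)) (x, s)
        + lt * w (x, s))
        (pd2 (pd2 w) (x, t) + pd2 (pd1 w) (x, t) + pd2 (pd1 (pd1 (pd1 w))) (x, t)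
          + lt * pd2 w (x, t)) t :=
      (((hasDerivAt_slice2' ((contDiff_pd2 hw).differentiable (by simp)) x t).add
        (hasDerivAt_slice2' ((contDiff_pd1 hw).differentiable (by simp)) x t)).add
        (hasDerivAt_slice2'
          ((contDiff_pd1 (contDiff_pd1 (contDiff_pd1 hw))).differentiable (by simp)) x t)).add
        ((hasDerivAt_slice2' hdw x t).const_mul lt)
    rw [hsum.deriv] at hD0
    rw [← hcomm1, ← hcomm3] at hD0
    have e2 : pd2 (pd2 w) (x, t) = pd2 v (x, t) := by rw [hv_def]
    have e3 : pd2 w (x, t) = v (x, t) := by rw [hv_def]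
    rw [e2, e3] at hD0
    linarith
  -- boundary values of v at positive times
  have vbd : ∀ c : ℝ, (∀ s : ℝ, 0 ≤ s → w (c, s) = 0) → ∀ t : ℝ, 0 < t → v (c, t) = 0 := by
    intro c hc t ht
    have hev : (fun s => w (c, s)) =ᶠ[nhds t] fun _ => (0 : ℝ) := by
      filter_upwards [Ioi_mem_nhds ht] with s hs
      exact hc s hs.le
    have h0 : v (c, t) = deriv (fun s => w (c, s)) t := rfl
    rw [h0, hev.deriv_eq, deriv_const]
  -- the boundary condition for pd1 v at x = L
  have vxL : ∀ t : ℝ, 0 < t →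
      pd1 v (L, t) = ∫ y in (0:ℝ)..L, pd1 p (L, y) * v (y, t) := by
    intro t ht
    have hgk : ContDiff ℝ (⊤ : ℕ∞) (fun q : ℝ × ℝ => pd1 p (L, q.1) * w q) :=
      ((contDiff_pd1 hp).comp (contDiff_const.prodMk contDiff_fst)).mul hw
    have hder := hasDerivAt_integral_param (g := fun q : ℝ × ℝ => pd1 p (L, q.1) * w q)
      hgk 0 L t
    have heq : (∫ y in (0:ℝ)..L, pd2 (fun q : ℝ × ℝ => pd1 p (L, q.1) * w q) (y, t))
        = ∫ y in (0:ℝ)..L, pd1 p (L, y) * v (y, t) := by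
      apply intervalIntegral.integral_congr
      intro y _
      have h1 : HasDerivAt (fun s => pd1 p (L, y) * w (y, s)) (pd1 p (L, y) * v (y, t)) t := by
        have h2 := (hasDerivAt_slice2' hdw y t).const_mul (pd1 p (L, y))
        rw [hv_def]
        exact h2
      show pd2 (fun q : ℝ × ℝ => pd1 p (L, q.1) * w q) (y, t) = pd1 p (L, y) * v (y, t)
      have h0 : pd2 (fun q : ℝ × ℝ => pd1 p (L, q.1) * w q) (y, t)
          = deriv (fun s => pd1 p (L, y) * w (y, s)) t := rfl
      rw [h0, h1.deriv]
    rw [heq] at hder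
    have hev : (fun s => pd1 w (L, s))
        =ᶠ[nhds t] (fun s => ∫ y in (0:ℝ)..L, pd1 p (L, y) * w (y, s)) := by
      filter_upwards [Ioi_mem_nhds ht] with s hs
      exact hBx s hs.le
    have h0 : pd1 v (L, t) = deriv (fun s => pd1 w (L, s)) t := by
      rw [hcomm1]; rfl
    rw [h0, hev.deriv_eq]
    exact hder.deriv
  -- the key differential inequality
  have key : ∀ t : ℝ, 0 < t → D t ≤ -(2 * α) * E t := by
    intro t ht
    have cont1 : Continuous fun x => v (x, t) := cont_slice1 hvc t
    have cont2 : Continuous fun x => pd1 v (x, t) := cont_slice1 hv1.continuous t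
    have cont4 : Continuous fun x => pd1 (pd1 (pd1 v)) (x, t) := cont_slice1 hv111.continuous t
    have I1 : (∫ x in (0:ℝ)..L, v (x, t) * pd1 v (x, t)) = 0 := by
      have hF : ∀ x ∈ Set.uIcc (0:ℝ) L, HasDerivAt (fun x => v (x, t) ^ 2 / 2)
          (v (x, t) * pd1 v (x, t)) x := by
        intro x _
        have h2 := ((hasDerivAt_slice1' hdv x t).fun_pow 2).div_const 2
        refine h2.congr_deriv ?_
        push_cast; ring
      rw [intervalIntegral.integral_eq_sub_of_hasDerivAt hF
        ((cont1.mul cont2).intervalIntegrable 0 L)]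
      rw [vbd L hBL t ht, vbd 0 hB0 t ht]
      ring
    have I3 : (∫ x in (0:ℝ)..L, v (x, t) * pd1 (pd1 (pd1 v)) (x, t))
        = pd1 v (0, t) ^ 2 / 2 - pd1 v (L, t) ^ 2 / 2 := by
      have hF : ∀ x ∈ Set.uIcc (0:ℝ) L, HasDerivAt
          (fun x => v (x, t) * pd1 (pd1 v) (x, t) - pd1 v (x, t) ^ 2 / 2)
          (v (x, t) * pd1 (pd1 (pd1 v)) (x, t)) x := by
        intro x _
        have h1 := (hasDerivAt_slice1' hdv x t).mul (hasDerivAt_slice1' hdv11 x t)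
        have h2 := ((hasDerivAt_slice1' hdv1 x t).fun_pow 2).div_const 2
        have h3 := h1.sub h2
        refine h3.congr_deriv ?_
        push_cast; ring
      rw [intervalIntegral.integral_eq_sub_of_hasDerivAt hF
        ((cont1.mul cont4).intervalIntegrable 0 L)]
      rw [vbd L hBL t ht, vbd 0 hB0 t ht]
      ring
    have hDt : D t = ∫ x in (0:ℝ)..L,
        ((-2) * (v (x, t) * pd1 v (x, t)) + (-2) * (v (x, t) * pd1 (pd1 (pd1 v)) (x, t))
          + (-(2 * lt)) * v (x, t) ^ 2) := by
      rw [hD_def]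
      apply intervalIntegral.integral_congr
      intro x hx
      have hx' : x ∈ Set.Icc (0:ℝ) L := by rwa [Set.uIcc_of_le hL.le] at hx
      show 2 * v (x, t) * pd2 v (x, t) = -2 * (v (x, t) * pd1 v (x, t))
        + -2 * (v (x, t) * pd1 (pd1 (pd1 v)) (x, t)) + -(2 * lt) * v (x, t) ^ 2
      rw [veq x t hx'.1 hx'.2 ht]
      ring
    have int1 : IntervalIntegrable (fun x => (-2 : ℝ) * (v (x, t) * pd1 v (x, t))) volume 0 L :=
      (continuous_const.mul (cont1.mul cont2)).intervalIntegrable 0 L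
    have int3 : IntervalIntegrable
        (fun x => (-2 : ℝ) * (v (x, t) * pd1 (pd1 (pd1 v)) (x, t))) volume 0 L :=
      (continuous_const.mul (cont1.mul cont4)).intervalIntegrable 0 L
    have int0 : IntervalIntegrable (fun x => (-(2 * lt)) * v (x, t) ^ 2) volume 0 L :=
      (continuous_const.mul (cont1.pow 2)).intervalIntegrable 0 L
    rw [hDt, intervalIntegral.integral_add (int1.add int3) int0,
      intervalIntegral.integral_add int1 int3,
      intervalIntegral.integral_const_mul, intervalIntegral.integral_const_mul,
      intervalIntegral.integral_const_mul, I1, I3]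
    have hCS : pd1 v (L, t) ^ 2 ≤ K * E t := by
      rw [vxL t ht, hK_def, hE_def]
      exact cs_interval hkc cont1 hL.le
    have hEK : (∫ x in (0:ℝ)..L, v (x, t) ^ 2) = E t := by rw [hE_def]
    rw [hEK, hα_def]
    nlinarith [sq_nonneg (pd1 v (0, t))]
  -- Gronwall-type argument
  have hg' : ∀ t : ℝ, HasDerivAt (fun s => E s * Real.exp (2 * α * s))
      (D t * Real.exp (2 * α * t) + E t * (Real.exp (2 * α * t) * (2 * α))) t := by
    intro t
    have hexp : HasDerivAt (fun s : ℝ => Real.exp (2 * α * s))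
        (Real.exp (2 * α * t) * (2 * α)) t := by
      have h1 : HasDerivAt (fun s : ℝ => 2 * α * s) (2 * α) t := by
        simpa using (hasDerivAt_id t).const_mul (2 * α)
      exact h1.exp
    exact (hE' t).mul hexp
  have hanti : AntitoneOn (fun s => E s * Real.exp (2 * α * s)) (Set.Ici (0:ℝ)) := by
    apply antitoneOn_of_deriv_nonpos (convex_Ici 0)
    · exact fun s _ => ((hg' s).differentiableAt.continuousAt).continuousWithinAt
    · intro s hs
      exact (hg' s).differentiableAt.differentiableWithinAt
    · intro s hs
      rw [interior_Ici] at hs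
      rw [(hg' s).deriv]
      have h1 := key s hs
      have h2 : (0:ℝ) < Real.exp (2 * α * s) := Real.exp_pos _
      have h3 : D s + 2 * α * E s ≤ 0 := by linarith
      calc D s * Real.exp (2 * α * s) + E s * (Real.exp (2 * α * s) * (2 * α))
          = (D s + 2 * α * E s) * Real.exp (2 * α * s) := by ring
        _ ≤ 0 := mul_nonpos_iff.mpr (Or.inr ⟨h3, h2.le⟩)
  have h1 : E T * Real.exp (2 * α * T) ≤ E 0 * Real.exp (2 * α * 0) :=
    hanti Set.self_mem_Ici (Set.mem_Ici.mpr hT) hT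
  rw [mul_zero, Real.exp_zero, mul_one] at h1
  have hET : E T ≤ E 0 * Real.exp (-(2 * α * T)) := by
    have h2 : E T = E T * Real.exp (2 * α * T) * Real.exp (-(2 * α * T)) := by
      rw [mul_assoc, ← Real.exp_add]
      simp
    rw [h2]
    exact mul_le_mul_of_nonneg_right h1 (Real.exp_nonneg _)
  have hfin : Real.sqrt (E T) ≤ Real.sqrt (E 0) * Real.exp (-α * T) := by
    have h2 : Real.sqrt (E T) ≤ Real.sqrt (E 0 * Real.exp (-(2 * α * T))) :=
      Real.sqrt_le_sqrt hET
    rw [Real.sqrt_mul (hEnn 0)] at h2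
    have h3 : Real.sqrt (Real.exp (-(2 * α * T))) = Real.exp (-α * T) := by
      rw [show -(2 * α * T) = -α * T + -α * T by ring, Real.exp_add,
        Real.sqrt_mul_self (Real.exp_nonneg _)]
    rwa [h3] at h2
  have e1 : (∫ x in (0:ℝ)..L, v (x, T) ^ 2) = E T := by rw [hE_def]
  have e2 : (∫ x in (0:ℝ)..L, v (x, 0) ^ 2) = E 0 := by rw [hE_def]
  rw [e1, e2]
  exact hfin
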